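/- arXiv:2010.02743 — 4 statements merged into one kernel-verified Lean document; each statement's English description precedes it below -/
import Mathlib

section
/- Let n ≥ 2, κ > 0, γ ≥ 1, and let Ψ: ((0,∞) × ℝ)^n → ℝ^n be the equal-pressure coupling map defined by Ψ₁(ρ₁,q₁,…,ρ_n,q_n) = Σ_{j=1}^n q_j and Ψ_j(ρ₁,q₁,…,ρ_n,q_n) = p(ρ_j) − p(ρ₁) for j = 2,…,n, with p(ρ) = κρ^γ. Then for every collection of subsonic states (ρ_k, q_k), k = 1,…,n (i.e. ρ_k > 0 and |q_k/ρ_k| < c(ρ_k)), the n×n matrix whose k-th column is D_kΨ(ρ₁,q₁,…,ρ_n,q_n) · r₂(ρ_k,q_k) has nonzero determinant, where D_kΨ denotes the n×2 block of the Jacobian of Ψ with respect to the variables (ρ_k,q_k) and r₂(ρ,q) = (1, q/ρ + c(ρ)). -/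
/-!
Below the first row, column `k` of the matrix is `d k • (e k - e 0)` with `d k = p'(ρ_k) > 0`,
and its first entry is `a k = q_k/ρ_k + c(ρ_k)`, which is positive by subsonicity. A kernel
vector `v` therefore has `d k * v k` equal to one common value `w`, and the first row reads
`w * ∑ k, a k / d k = 0`; the sum is positive, so `w = 0` and `v = 0`.
-/

open Matrix ContinuousLinearMap

section CouplingMatrix

variable {ι 𝕜 : Type*} [Fintype ι] [DecidableEq ι] [Field 𝕜]

def couplingMatrix (i₀ : ι) (a d : ι → 𝕜) : Matrix ι ι 𝕜 :=
  of fun i k => if i = i₀ then a k else d k * ((1 : Matrix ι ι 𝕜) i k - (1 : Matrix ι ι 𝕜) i₀ k)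

theorem couplingMatrix_mulVec_self (i₀ : ι) (a d v : ι → 𝕜) :
    (couplingMatrix i₀ a d *ᵥ v) i₀ = ∑ k, a k * v k := by
  simp [couplingMatrix, mulVec, dotProduct]

theorem couplingMatrix_mulVec_of_ne {i₀ i : ι} (a d v : ι → 𝕜) (hi : i ≠ i₀) :
    (couplingMatrix i₀ a d *ᵥ v) i = d i * v i - d i₀ * v i₀ := by
  simp [couplingMatrix, mulVec, dotProduct, hi, one_apply, mul_sub, sub_mul, Finset.sum_sub_distrib]

theorem det_couplingMatrix_ne_zero {i₀ : ι} {a d : ι → 𝕜} (hd : ∀ k, d k ≠ 0)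
    (hsum : ∑ k, a k / d k ≠ 0) : (couplingMatrix i₀ a d).det ≠ 0 := by
  intro hdet
  obtain ⟨v, hv, hMv⟩ := exists_mulVec_eq_zero_iff.2 hdet
  have hdv : ∀ k, d k * v k = d i₀ * v i₀ := fun k => by
    by_cases hk : k = i₀
    · rw [hk]
    · rw [← sub_eq_zero, ← couplingMatrix_mulVec_of_ne a d v hk, hMv, Pi.zero_apply]
  have hv_eq : ∀ k, v k = d i₀ * v i₀ / d k := fun k => by
    rw [← hdv k, mul_div_cancel_left₀ _ (hd k)]
  have hw : d i₀ * v i₀ * ∑ k, a k / d k = 0 := by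
    calc d i₀ * v i₀ * ∑ k, a k / d k = ∑ k, a k * v k := by
          rw [Finset.mul_sum]
          exact Finset.sum_congr rfl fun k _ => by rw [hv_eq k]; ring
      _ = 0 := by rw [← couplingMatrix_mulVec_self i₀ a d v, hMv, Pi.zero_apply]
  have hw0 : d i₀ * v i₀ = 0 := (mul_eq_zero.1 hw).resolve_right hsum
  exact hv (funext fun k => by rw [hv_eq k, hw0, zero_div, Pi.zero_apply])

end CouplingMatrix

section EqualPressureMap

variable {ι : Type*} [Fintype ι] [DecidableEq ι]

def equalPressureMap (p : ℝ → ℝ) (i₀ : ι) (w : ι → ℝ × ℝ) (i : ι) : ℝ :=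
  if i = i₀ then ∑ j, (w j).2 else p (w i).1 - p (w i₀).1

theorem fderiv_equalPressureMap_apply {p : ℝ → ℝ} {dp : ι → ℝ} {u : ι → ℝ × ℝ} (i₀ : ι)
    (hp : ∀ j, HasDerivAt p (dp j) (u j).1) (v : ι → ℝ × ℝ) (i : ι) :
    fderiv ℝ (equalPressureMap p i₀) u v i =
      if i = i₀ then ∑ j, (v j).2 else dp i * (v i).1 - dp i₀ * (v i₀).1 := by
  have hcomp : ∀ i, HasFDerivAt (fun w => equalPressureMap p i₀ w i)
      (if i = i₀ then ∑ j, snd ℝ ℝ ℝ ∘L proj j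
        else dp i • (fst ℝ ℝ ℝ ∘L proj i) - dp i₀ • (fst ℝ ℝ ℝ ∘L proj i₀)) u := fun i => by
    unfold equalPressureMap
    split_ifs
    · exact HasFDerivAt.fun_sum fun j _ => (hasFDerivAt_apply j u).snd
    · exact ((hp i).comp_hasFDerivAt u (hasFDerivAt_apply i u).fst).sub
        ((hp i₀).comp_hasFDerivAt u (hasFDerivAt_apply i₀ u).fst)
  rw [(hasFDerivAt_pi.2 hcomp).fderiv]
  split_ifs <;> simp [*]

theorem fderiv_equalPressureMap_single {p : ℝ → ℝ} {dp : ι → ℝ} {u : ι → ℝ × ℝ} (i₀ : ι)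
    (hp : ∀ j, HasDerivAt p (dp j) (u j).1) (k : ι) (x : ℝ × ℝ) (i : ι) :
    fderiv ℝ (equalPressureMap p i₀) u (Pi.single k x) i =
      if i = i₀ then x.2 else dp k * ((1 : Matrix ι ι ℝ) i k - (1 : Matrix ι ι ℝ) i₀ k) * x.1 := by
  rw [fderiv_equalPressureMap_apply i₀ hp]
  split_ifs with hi
  · simp [Pi.single_apply, apply_ite Prod.snd]
  · rcases eq_or_ne k i with rfl | hik <;> rcases eq_or_ne k i₀ with rfl | hk <;>
      simp_all [one_apply, eq_comm]

end EqualPressureMap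

theorem equal_pressure_coupling_nondegenerate_general
    (n : ℕ) (κ γ : ℝ) (hκ : 0 < κ) (hγ : 1 ≤ γ)
    (p c : ℝ → ℝ)
    (hp : ∀ r : ℝ, p r = κ * r ^ γ)
    (r₂ : ℝ × ℝ → ℝ × ℝ) (hr₂ : ∀ w : ℝ × ℝ, r₂ w = (1, w.2 / w.1 + c w.1))
    (Ψ : (Fin (n + 2) → ℝ × ℝ) → (Fin (n + 2) → ℝ))
    (hΨ : ∀ w : Fin (n + 2) → ℝ × ℝ, ∀ i : Fin (n + 2),
      Ψ w i = if i = 0 then ∑ j, (w j).2 else p (w i).1 - p (w 0).1)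
    (u : Fin (n + 2) → ℝ × ℝ)
    (hpos : ∀ k, 0 < (u k).1)
    (hsub : ∀ k, |(u k).2 / (u k).1| < c ((u k).1)) :
    Matrix.det (Matrix.of fun i k : Fin (n + 2) =>
      fderiv ℝ Ψ u (Pi.single k (r₂ (u k))) i) ≠ 0 := by
  set dp : Fin (n + 2) → ℝ := fun k => κ * (γ * (u k).1 ^ (γ - 1))
  set a : Fin (n + 2) → ℝ := fun k => (u k).2 / (u k).1 + c (u k).1
  have hp' : ∀ k, HasDerivAt p (dp k) (u k).1 := fun k => by
    rw [show p = fun r => κ * r ^ γ from funext hp]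
    exact (Real.hasDerivAt_rpow_const (Or.inl (hpos k).ne')).const_mul κ
  have hdp : ∀ k, 0 < dp k := fun k =>
    mul_pos hκ (mul_pos (by linarith) (Real.rpow_pos_of_pos (hpos k) _))
  have ha : ∀ k, 0 < a k := fun k => by
    linarith [neg_abs_le ((u k).2 / (u k).1), hsub k]
  have hM : (Matrix.of fun i k => fderiv ℝ Ψ u (Pi.single k (r₂ (u k))) i) =
      couplingMatrix 0 a dp := by
    ext i k
    rw [of_apply, show Ψ = equalPressureMap p 0 from funext fun w => funext (hΨ w),
      fderiv_equalPressureMap_single 0 hp', hr₂]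
    simp [couplingMatrix, a]
  rw [hM]
  exact det_couplingMatrix_ne_zero (fun k => (hdp k).ne')
    (Finset.sum_pos (fun k _ => div_pos (ha k) (hdp k)) Finset.univ_nonempty).ne'

/-- For the equal-pressure coupling map `Ψ` at a vertex with `n + 2 ≥ 2`
adjacent pipes (`Ψ₁ = Σ q_j`, `Ψ_j = p(ρ_j) − p(ρ₁)` for `j ≥ 2`, `p(ρ) = κρ^γ`),
and any collection of subsonic states `(ρ_k, q_k)`, the `n×n` matrix whose `k`-th
column is `D_kΨ · r₂(ρ_k,q_k)` (the Jacobian block of `Ψ` in the variables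
`(ρ_k,q_k)` applied to the second right eigenvector `r₂(ρ,q) = (1, q/ρ + c(ρ))`)
has nonzero determinant. -/
theorem equal_pressure_coupling_nondegenerate
    (n : ℕ) (κ γ : ℝ) (hκ : 0 < κ) (hγ : 1 ≤ γ)
    (p c : ℝ → ℝ)
    (hp : ∀ r : ℝ, p r = κ * r ^ γ)
    (hc : ∀ r : ℝ, c r = Real.sqrt (κ * γ) * r ^ ((γ - 1) / 2))
    (r₂ : ℝ × ℝ → ℝ × ℝ) (hr₂ : ∀ w : ℝ × ℝ, r₂ w = (1, w.2 / w.1 + c w.1))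
    (Ψ : (Fin (n + 2) → ℝ × ℝ) → (Fin (n + 2) → ℝ))
    (hΨ : ∀ w : Fin (n + 2) → ℝ × ℝ, ∀ i : Fin (n + 2),
      Ψ w i = if i = 0 then ∑ j, (w j).2 else p (w i).1 - p (w 0).1)
    (u : Fin (n + 2) → ℝ × ℝ)
    (hpos : ∀ k, 0 < (u k).1)
    (hsub : ∀ k, |(u k).2 / (u k).1| < c ((u k).1)) :
    Matrix.det (Matrix.of fun i k : Fin (n + 2) =>
      fderiv ℝ Ψ u (Pi.single k (r₂ (u k))) i) ≠ 0 :=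
  equal_pressure_coupling_nondegenerate_general n κ γ hκ hγ p c hp r₂ hr₂ Ψ hΨ u hpos hsub
end

section
/- Let n ≥ 2, κ > 0, γ ≥ 1, and let Ψ: ((0,∞) × ℝ)^n → ℝ^n be the equal-dynamic-pressure coupling map defined by Ψ₁(ρ₁,q₁,…,ρ_n,q_n) = Σ_{j=1}^n q_j and Ψ_j(ρ₁,q₁,…,ρ_n,q_n) = (q_j²/ρ_j + p(ρ_j)) − (q₁²/ρ₁ + p(ρ₁)) for j = 2,…,n, with p(ρ) = κρ^γ. Then for every collection of subsonic states (ρ_k, q_k), k = 1,…,n (i.e. ρ_k > 0 and |q_k/ρ_k| < c(ρ_k)), the n×n matrix whose k-th column is D_kΨ(ρ₁,q₁,…,ρ_n,q_n) · r₂(ρ_k,q_k) has nonzero determinant, where D_kΨ denotes the n×2 block of the Jacobian of Ψ with respect to the variables (ρ_k,q_k) and r₂(ρ,q) = (1, q/ρ + c(ρ)). -/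
/-!
Since `r₂` is an eigenvector of the flux Jacobian for `λ₂ = v + c` and has second component `λ₂`,
the derivative of the momentum flux `q²/ρ + p(ρ)` along `r₂` is `λ₂²`. Hence the matrix has first
row `(λ₂(u_k))_k`, and its row `i ≠ 0` is `λ₂(u_i)² e_i - λ₂(u_0)² e_0`. A kernel vector `x` then
satisfies `λ₂(u_i)² x_i = λ₂(u_0)² x_0` for all `i`, so the first row gives
`λ₂(u_0)² x_0 · Σ_k 1/λ₂(u_k) = 0`; subsonic states have `λ₂ > 0`, which forces `x = 0`.
-/

open ContinuousLinearMap

theorem Matrix.det_ne_zero_of_sum_div_ne_zero {K ι : Type*} [Field K] [Fintype ι] [DecidableEq ι]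
    (i₀ : ι) (a b : ι → K) (hb : ∀ k, b k ≠ 0) (hab : ∑ k, a k / b k ≠ 0) :
    (of fun i => if i = i₀ then a else Pi.single i (b i) - Pi.single i₀ (b i₀)).det ≠ 0 := by
  intro hdet
  obtain ⟨x, hx, hMx⟩ := exists_mulVec_eq_zero_iff.mpr hdet
  have hrow : ∀ i, b i * x i = b i₀ * x i₀ := by
    intro i
    by_cases hi : i = i₀
    · rw [hi]
    have h : (if i = i₀ then a else Pi.single i (b i) - Pi.single i₀ (b i₀)) ⬝ᵥ x = 0 :=
      congrFun hMx i
    rwa [if_neg hi, sub_dotProduct, single_dotProduct, single_dotProduct, sub_eq_zero] at h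
  have hx_eq : ∀ i, x i = b i₀ * x i₀ / b i := fun i => by
    rw [← hrow i, mul_div_cancel_left₀ _ (hb i)]
  have hsum : b i₀ * x i₀ * ∑ k, a k / b k = 0 := by
    have h : (if i₀ = i₀ then a else Pi.single i₀ (b i₀) - Pi.single i₀ (b i₀)) ⬝ᵥ x = 0 :=
      congrFun hMx i₀
    rw [if_pos rfl] at h
    rw [Finset.mul_sum, ← h]
    refine Finset.sum_congr rfl fun k _ => ?_
    rw [hx_eq k]; ring
  have hx₀ : x i₀ = 0 := by simpa [hb i₀, hab] using hsum
  exact hx (funext fun i => by simp [hx_eq i, hx₀])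

theorem Real.sq_sqrt_mul_rpow_div_two {a ρ : ℝ} (ha : 0 ≤ a) (hρ : 0 ≤ ρ) (e : ℝ) :
    (√a * ρ ^ (e / 2)) ^ 2 = a * ρ ^ e := by
  rw [mul_pow, sq_sqrt ha, ← rpow_natCast, ← rpow_mul hρ]
  norm_num

theorem hasFDerivAt_momentumFlux {p : ℝ → ℝ} {p' : ℝ} {w : ℝ × ℝ} (hp : HasDerivAt p p' w.1)
    (hw : w.1 ≠ 0) :
    HasFDerivAt (fun x : ℝ × ℝ => x.2 ^ 2 / x.1 + p x.1)
      ((p' - (w.2 / w.1) ^ 2) • fst ℝ ℝ ℝ + (2 * (w.2 / w.1)) • snd ℝ ℝ ℝ) w := by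
  have hfst : HasFDerivAt (Prod.fst : ℝ × ℝ → ℝ) (fst ℝ ℝ ℝ) w := hasFDerivAt_fst
  have hsnd : HasFDerivAt (Prod.snd : ℝ × ℝ → ℝ) (snd ℝ ℝ ℝ) w := hasFDerivAt_snd
  have h := ((hsnd.pow 2).mul ((hasDerivAt_inv hw).comp_hasFDerivAt w hfst)).add
    (hp.comp_hasFDerivAt w hfst)
  simp_rw [div_eq_mul_inv]
  refine h.congr_fderiv (ContinuousLinearMap.ext fun v => ?_)
  simp
  field_simp
  ring

theorem momentumFlux_fderiv_apply_eigenvector {p' v c : ℝ} (hc : c ^ 2 = p') :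
    ((p' - v ^ 2) • fst ℝ ℝ ℝ + (2 * v) • snd ℝ ℝ ℝ) (1, v + c) = (v + c) ^ 2 := by
  simp [← hc]
  ring

section Coupling

variable {ι E : Type*} [Fintype ι] [DecidableEq ι] [NormedAddCommGroup E] [NormedSpace ℝ E]
  (g : E →L[ℝ] ℝ) {F : E → ℝ} {F' : ι → E →L[ℝ] ℝ} {u : ι → E} (i₀ : ι)

theorem hasFDerivAt_coupling (hF : ∀ k, HasFDerivAt F (F' k) (u k)) :
    HasFDerivAt (fun w i => if i = i₀ then ∑ j, g (w j) else F (w i) - F (w i₀))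
      (ContinuousLinearMap.pi fun i => if i = i₀ then ∑ j, g.comp (proj j)
        else (F' i).comp (proj i) - (F' i₀).comp (proj i₀)) u := by
  refine hasFDerivAt_pi.2 fun i => ?_
  split_ifs
  · exact HasFDerivAt.fun_sum fun j _ => g.hasFDerivAt.comp u (hasFDerivAt_apply j u)
  · exact ((hF i).comp u (hasFDerivAt_apply i u)).sub ((hF i₀).comp u (hasFDerivAt_apply i₀ u))

theorem fderiv_coupling_apply_single (hF : ∀ k, HasFDerivAt F (F' k) (u k)) (v : ι → E) (i k : ι) :
    fderiv ℝ (fun w i => if i = i₀ then ∑ j, g (w j) else F (w i) - F (w i₀)) u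
      (Pi.single k (v k)) i =
    (if i = i₀ then g ∘ v else Pi.single i (F' i (v i)) - Pi.single i₀ (F' i₀ (v i₀))) k := by
  rw [(hasFDerivAt_coupling g i₀ hF).fderiv]
  split_ifs with hi
  · simp [hi, Pi.single_apply, apply_ite g]
  · simp only [hi, if_false, Pi.single_apply, sub_apply,
      ContinuousLinearMap.comp_apply, pi_apply, Pi.sub_apply, eq_comm (a := k)]
    split_ifs <;> simp_all

end Coupling

/-- For the equal-dynamic-pressure coupling map `Ψ` at a vertex with
`n + 2 ≥ 2` adjacent pipes (`Ψ₁ = Σ q_j`, `Ψ_j = (q_j²/ρ_j + p(ρ_j)) − (q₁²/ρ₁ + p(ρ₁))`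
for `j ≥ 2`, `p(ρ) = κρ^γ`), and any collection of subsonic states `(ρ_k, q_k)`,
the `n×n` matrix whose `k`-th column is `D_kΨ · r₂(ρ_k,q_k)` (the Jacobian block of
`Ψ` in the variables `(ρ_k,q_k)` applied to the second right eigenvector
`r₂(ρ,q) = (1, q/ρ + c(ρ))`) has nonzero determinant. -/
theorem equal_dynamic_pressure_coupling_nondegenerate
    (n : ℕ) (κ γ : ℝ) (hκ : 0 < κ) (hγ : 1 ≤ γ)
    (p c : ℝ → ℝ)
    (hp : ∀ r : ℝ, p r = κ * r ^ γ)
    (hc : ∀ r : ℝ, c r = Real.sqrt (κ * γ) * r ^ ((γ - 1) / 2))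
    (r₂ : ℝ × ℝ → ℝ × ℝ) (hr₂ : ∀ w : ℝ × ℝ, r₂ w = (1, w.2 / w.1 + c w.1))
    (Ψ : (Fin (n + 2) → ℝ × ℝ) → (Fin (n + 2) → ℝ))
    (hΨ : ∀ w : Fin (n + 2) → ℝ × ℝ, ∀ i : Fin (n + 2),
      Ψ w i = if i = 0 then ∑ j, (w j).2
        else ((w i).2 ^ 2 / (w i).1 + p (w i).1) - ((w 0).2 ^ 2 / (w 0).1 + p (w 0).1))
    (u : Fin (n + 2) → ℝ × ℝ)
    (hpos : ∀ k, 0 < (u k).1)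
    (hsub : ∀ k, |(u k).2 / (u k).1| < c ((u k).1)) :
    Matrix.det (Matrix.of fun i k : Fin (n + 2) =>
      fderiv ℝ Ψ u (Pi.single k (r₂ (u k))) i) ≠ 0 := by
  have hΨ' : Ψ = fun w i => if i = 0 then ∑ j, snd ℝ ℝ ℝ (w j)
      else ((w i).2 ^ 2 / (w i).1 + p (w i).1) - ((w 0).2 ^ 2 / (w 0).1 + p (w 0).1) :=
    funext fun w => funext (hΨ w)
  set ℓ : Fin (n + 2) → ℝ := fun k => (u k).2 / (u k).1 + c (u k).1
  have hℓ_pos : ∀ k, 0 < ℓ k := fun k => by linarith [(abs_lt.mp (hsub k)).1]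
  have hp' : ∀ k, HasDerivAt p (κ * (γ * (u k).1 ^ (γ - 1))) (u k).1 := fun k => by
    rw [funext hp]
    exact (Real.hasDerivAt_rpow_const (Or.inl (hpos k).ne')).const_mul κ
  have hc_sq : ∀ k, c (u k).1 ^ 2 = κ * (γ * (u k).1 ^ (γ - 1)) := fun k => by
    rw [hc, Real.sq_sqrt_mul_rpow_div_two (mul_pos hκ (by linarith)).le (hpos k).le, mul_assoc]
  have hF := fun k => hasFDerivAt_momentumFlux (hp' k) (hpos k).ne'
  have hcol : ∀ i k, fderiv ℝ Ψ u (Pi.single k (r₂ (u k))) i =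
      (if i = 0 then ℓ else Pi.single i (ℓ i ^ 2) - Pi.single 0 (ℓ 0 ^ 2)) k := by
    intro i k
    rw [hΨ', fderiv_coupling_apply_single (snd ℝ ℝ ℝ) 0 hF (fun k => r₂ (u k))]
    simp only [hr₂, momentumFlux_fderiv_apply_eigenvector (hc_sq _)]
    rfl
  simp only [hcol]
  refine Matrix.det_ne_zero_of_sum_div_ne_zero 0 ℓ (ℓ ^ 2)
    (fun k => pow_ne_zero 2 (hℓ_pos k).ne') ?_
  exact (Finset.sum_pos (fun k _ => div_pos (hℓ_pos k) (pow_pos (hℓ_pos k) 2))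
    Finset.univ_nonempty).ne'
end

section
/- Let n ≥ 2, κ > 0, γ > 1, and let Ψ: ((0,∞) × ℝ)^n → ℝ^n be the equal-Bernoulli-invariant coupling map defined by Ψ₁(ρ₁,q₁,…,ρ_n,q_n) = Σ_{j=1}^n q_j and Ψ_j(ρ₁,q₁,…,ρ_n,q_n) = (½ (q_j/ρ_j)² + h(ρ_j)) − (½ (q₁/ρ₁)² + h(ρ₁)) for j = 2,…,n, where h(ρ) = κγ/(γ−1) ρ^{γ−1} is the specific enthalpy (so h'(ρ) = p'(ρ)/ρ for p(ρ) = κρ^γ). Then for every collection of subsonic states (ρ_k, q_k), k = 1,…,n (i.e. ρ_k > 0 and |q_k/ρ_k| < c(ρ_k)), the n×n matrix whose k-th column is D_kΨ(ρ₁,q₁,…,ρ_n,q_n) · r₂(ρ_k,q_k) has nonzero determinant, where D_kΨ denotes the n×2 block of the Jacobian of Ψ with respect to the variables (ρ_k,q_k) and r₂(ρ,q) = (1, q/ρ + c(ρ)). -/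
/-!
Along `r₂ = (1, λ)` with `λ = v + c`, the mass flux `Σ q_j` grows at rate `λ` and the Bernoulli
invariant `v²/2 + h(ρ)` at rate `(h'(ρ) - v²/ρ) + vλ/ρ = cλ/ρ`, because `h'(ρ) = p'(ρ)/ρ = c²/ρ`;
subsonicity `|v| < c` makes both rates positive. Hence row `0` of the matrix is `(λ_k)_k` and row
`i ≠ 0` is `d_i e_i - d_0 e_0` with `d_k = c_k λ_k / ρ_k > 0`. A kernel vector `x` therefore has all
`d_k x_k` equal, and row `0` becomes `d_0 x_0 Σ_k λ_k / d_k = 0`, forcing `x = 0`.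
-/

section Junction

variable {ι K : Type*} [Fintype ι] [DecidableEq ι] [Field K] [LinearOrder K] [IsStrictOrderedRing K]

theorem det_junction_ne_zero (i₀ : ι) {a d : ι → K} (ha : ∀ k, 0 < a k) (hd : ∀ k, 0 < d k) :
    (Matrix.of fun i k : ι =>
      if i = i₀ then a k else (if i = k then d k else 0) - (if k = i₀ then d k else 0)).det ≠ 0 := by
  intro hdet
  obtain ⟨x, hx, hMx⟩ := Matrix.exists_mulVec_eq_zero_iff.mpr hdet
  have hrow (i : ι) := congrFun hMx i
  simp only [Matrix.mulVec, dotProduct, Matrix.of_apply, Pi.zero_apply] at hrow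
  have hflat (k : ι) : d k * x k = d i₀ * x i₀ := by
    by_cases hk : k = i₀
    · rw [hk]
    · simpa [hk, sub_mul, Finset.sum_sub_distrib, sub_eq_zero] using hrow k
  have hx_eq (k : ι) : x k = d i₀ * x i₀ / d k := by
    rw [← hflat k, mul_div_cancel_left₀ _ (hd k).ne']
  have hpivot : d i₀ * x i₀ * ∑ k, a k / d k = 0 := by
    rw [Finset.mul_sum, ← (by simpa using hrow i₀ : ∑ k, a k * x k = 0)]
    refine Finset.sum_congr rfl fun k _ => ?_
    rw [hx_eq k]
    ring
  have hS : 0 < ∑ k, a k / d k :=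
    Finset.sum_pos (fun k _ => div_pos (ha k) (hd k)) ⟨i₀, Finset.mem_univ _⟩
  have hx₀ : x i₀ = 0 := by simpa [(hd i₀).ne', hS.ne'] using hpivot
  exact hx (funext fun k => by simp [hx_eq k, hx₀])

end Junction

noncomputable def bernoulliInvariant (h : ℝ → ℝ) (w : ℝ × ℝ) : ℝ := 1 / 2 * (w.2 / w.1) ^ 2 + h w.1

theorem hasFDerivAt_bernoulliInvariant {h : ℝ → ℝ} {h' ρ : ℝ} (q : ℝ) (hh : HasDerivAt h h' ρ)
    (hρ : ρ ≠ 0) :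
    HasFDerivAt (bernoulliInvariant h)
      ((h' - q ^ 2 / ρ ^ 3) • ContinuousLinearMap.fst ℝ ℝ ℝ
        + (q / ρ ^ 2) • ContinuousLinearMap.snd ℝ ℝ ℝ) (ρ, q) := by
  have hfst : HasFDerivAt Prod.fst (ContinuousLinearMap.fst ℝ ℝ ℝ) (ρ, q) := hasFDerivAt_fst
  have hv : HasFDerivAt (fun w : ℝ × ℝ => w.2 * w.1⁻¹)
      (q • (-(ρ ^ 2)⁻¹) • ContinuousLinearMap.fst ℝ ℝ ℝ
        + ρ⁻¹ • ContinuousLinearMap.snd ℝ ℝ ℝ) (ρ, q) :=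
    hasFDerivAt_snd.mul ((hasDerivAt_inv hρ).comp_hasFDerivAt (ρ, q) hfst)
  refine (((hv.pow 2).const_mul (1 / 2 : ℝ)).add
    (hh.comp_hasFDerivAt (ρ, q) hfst)).congr_fderiv ?_
  ext <;> simp <;> ring

theorem fderiv_bernoulliInvariant_eigenvector {h : ℝ → ℝ} {ρ q c : ℝ}
    (hh : HasDerivAt h (c ^ 2 / ρ) ρ) (hρ : ρ ≠ 0) :
    fderiv ℝ (bernoulliInvariant h) (ρ, q) (1, q / ρ + c) = c * (q / ρ + c) / ρ := by
  rw [(hasFDerivAt_bernoulliInvariant q hh hρ).fderiv]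
  simp only [add_apply, smul_apply,
    ContinuousLinearMap.coe_fst', ContinuousLinearMap.coe_snd', smul_eq_mul]
  field_simp
  ring

theorem hasDerivAt_enthalpy {κ γ ρ : ℝ} (hκγ : 0 ≤ κ * γ) (hγ : γ ≠ 1) (hρ : 0 < ρ) :
    HasDerivAt (fun r => κ * γ / (γ - 1) * r ^ (γ - 1))
      ((√(κ * γ) * ρ ^ ((γ - 1) / 2)) ^ 2 / ρ) ρ := by
  have hsq : (√(κ * γ) * ρ ^ ((γ - 1) / 2)) ^ 2 = κ * γ * ρ ^ (γ - 1) := by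
    rw [mul_pow, Real.sq_sqrt hκγ, ← Real.rpow_mul_natCast hρ.le]
    norm_num
  refine ((Real.hasDerivAt_rpow_const (Or.inl hρ.ne')).const_mul _).congr_deriv ?_
  rw [hsq, Real.rpow_sub hρ, Real.rpow_one]
  field_simp [sub_ne_zero.mpr hγ]

section Coupling

variable {ι : Type*} [Fintype ι] [DecidableEq ι]

def equalInvariantCoupling (i₀ : ι) (B : ℝ × ℝ → ℝ) (w : ι → ℝ × ℝ) : ι → ℝ :=
  fun i => if i = i₀ then ∑ j, (w j).2 else B (w i) - B (w i₀)

theorem fderiv_equalInvariantCoupling_single {i₀ : ι} {B : ℝ × ℝ → ℝ} {u : ι → ℝ × ℝ}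
    (hB : ∀ j, DifferentiableAt ℝ B (u j)) (k i : ι) (v : ℝ × ℝ) :
    fderiv ℝ (equalInvariantCoupling i₀ B) u (Pi.single k v) i =
      if i = i₀ then v.2
      else (if i = k then fderiv ℝ B (u k) v else 0)
        - (if k = i₀ then fderiv ℝ B (u k) v else 0) := by
  have hcomp (j : ι) : HasFDerivAt (fun w : ι → ℝ × ℝ => B (w j))
      ((fderiv ℝ B (u j)).comp (ContinuousLinearMap.proj j)) u :=
    (hB j).hasFDerivAt.comp u (hasFDerivAt_apply j u)
  have hrow (i : ι) : HasFDerivAt (fun w => equalInvariantCoupling i₀ B w i)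
      (if i = i₀ then ∑ j, (ContinuousLinearMap.snd ℝ ℝ ℝ).comp (ContinuousLinearMap.proj j)
        else (fderiv ℝ B (u i)).comp (ContinuousLinearMap.proj i)
          - (fderiv ℝ B (u i₀)).comp (ContinuousLinearMap.proj i₀)) u := by
    unfold equalInvariantCoupling
    split_ifs
    · exact HasFDerivAt.fun_sum fun j _ => (hasFDerivAt_apply j u).snd
    · exact (hcomp i).sub (hcomp i₀)
  rw [(hasFDerivAt_pi.2 hrow).fderiv]
  split_ifs <;> simp_all [Pi.single_apply, apply_ite Prod.snd]

end Coupling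

/-- For the equal-Bernoulli-invariant coupling map `Ψ` at a vertex with
`n + 2 ≥ 2` adjacent pipes (`Ψ₁ = Σ q_j`,
`Ψ_j = (½(q_j/ρ_j)² + h(ρ_j)) − (½(q₁/ρ₁)² + h(ρ₁))` for `j ≥ 2`, with specific
enthalpy `h(ρ) = κγ/(γ−1) ρ^{γ−1}`, `γ > 1`), and any collection of subsonic states
`(ρ_k, q_k)`, the `n×n` matrix whose `k`-th column is `D_kΨ · r₂(ρ_k,q_k)`
(the Jacobian block of `Ψ` in the variables `(ρ_k,q_k)` applied to the second right
eigenvector `r₂(ρ,q) = (1, q/ρ + c(ρ))`) has nonzero determinant. -/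
theorem equal_bernoulli_coupling_nondegenerate
    (n : ℕ) (κ γ : ℝ) (hκ : 0 < κ) (hγ : 1 < γ)
    (h c : ℝ → ℝ)
    (hh : ∀ r : ℝ, h r = κ * γ / (γ - 1) * r ^ (γ - 1))
    (hc : ∀ r : ℝ, c r = Real.sqrt (κ * γ) * r ^ ((γ - 1) / 2))
    (r₂ : ℝ × ℝ → ℝ × ℝ) (hr₂ : ∀ w : ℝ × ℝ, r₂ w = (1, w.2 / w.1 + c w.1))
    (Ψ : (Fin (n + 2) → ℝ × ℝ) → (Fin (n + 2) → ℝ))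
    (hΨ : ∀ w : Fin (n + 2) → ℝ × ℝ, ∀ i : Fin (n + 2),
      Ψ w i = if i = 0 then ∑ j, (w j).2
        else ((1 / 2) * ((w i).2 / (w i).1) ^ 2 + h (w i).1)
          - ((1 / 2) * ((w 0).2 / (w 0).1) ^ 2 + h (w 0).1))
    (u : Fin (n + 2) → ℝ × ℝ)
    (hpos : ∀ k, 0 < (u k).1)
    (hsub : ∀ k, |(u k).2 / (u k).1| < c ((u k).1)) :
    Matrix.det (Matrix.of fun i k : Fin (n + 2) =>
      fderiv ℝ Ψ u (Pi.single k (r₂ (u k))) i) ≠ 0 := by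
  have hΨB : Ψ = equalInvariantCoupling 0 (bernoulliInvariant h) := funext fun w => funext (hΨ w)
  have hh_deriv (k) : HasDerivAt h (c (u k).1 ^ 2 / (u k).1) (u k).1 := by
    rw [show h = _ from funext hh, hc]
    exact hasDerivAt_enthalpy (by positivity) hγ.ne' (hpos k)
  have hB (k) : DifferentiableAt ℝ (bernoulliInvariant h) (u k) :=
    (hasFDerivAt_bernoulliInvariant _ (hh_deriv k) (hpos k).ne').differentiableAt
  have hBr₂ (k) : fderiv ℝ (bernoulliInvariant h) (u k) (1, (u k).2 / (u k).1 + c (u k).1)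
      = c (u k).1 * ((u k).2 / (u k).1 + c (u k).1) / (u k).1 :=
    fderiv_bernoulliInvariant_eigenvector (hh_deriv k) (hpos k).ne'
  have hc_pos (k) : 0 < c (u k).1 := (abs_nonneg _).trans_lt (hsub k)
  have hspeed_pos (k) : 0 < (u k).2 / (u k).1 + c (u k).1 := by
    linarith [(abs_lt.mp (hsub k)).1]
  simp only [hΨB, fderiv_equalInvariantCoupling_single hB, hr₂, hBr₂]
  exact det_junction_ne_zero 0 hspeed_pos fun k =>
    div_pos (mul_pos (hc_pos k) (hspeed_pos k)) (hpos k)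
end

section
/- Let d ≥ 1, N ≥ 0, Δx = 1/(N+1), Δt > 0, and for j = 1,…,d let λ_j > 0 satisfy the CFL condition λ_j Δt/Δx ≤ 1, let κ_j ∈ (0,1), and let μ_j satisfy 0 < μ_j ≤ ln(1/κ_j). Let the numbers U_{j,i}^m for j = 1,…,d, i = −1,0,…,N, m ≥ 0 satisfy the upwind scheme U_{j,i}^{m+1} = U_{j,i}^m − (λ_j Δt/Δx)(U_{j,i}^m − U_{j,i−1}^m) for all i = 0,…,N and m ≥ 0, together with the linear feedback boundary condition U_{j,−1}^m = κ_j U_{j,N}^m for all m ≥ 0. Define the discrete Lyapunov function L^m = Δx Σ_{i=0}^N Σ_{j=1}^d (U_{j,i}^m)² exp(−μ_j i Δx). Then L^m decays exponentially: L^m ≤ exp(−ν t^m) L^0 for all m ≥ 0, where t^m = m Δt and ν = min_{j=1,…,d} (λ_j μ_j exp(−μ_j Δx) / 2). -/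
/-!
Under the CFL condition each upwind update is a convex combination of a cell value and its
left neighbour, so its square is at most the same convex combination of squares. Writing the
weight of cell `i` as `q ^ i` with `q = exp (-μ Δx)`, the left-shifted weighted sum is at most
`q` times the unshifted one; the ghost cell fits into this bound because
`κ² ≤ κ ≤ exp (-μ) = q ^ (N + 1)`.
Hence each component's weighted energy contracts by `1 - c (1 - q)` per step, `c = λ Δt / Δx`,
and `1 - q ≥ μ Δx q` turns this factor into `exp (-ν Δt)`.
-/

open Finset Real

noncomputable def weightedEnergy (q : ℝ) (n : ℕ) (u : ℤ → ℝ) : ℝ :=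
  ∑ i ∈ range (n + 1), u i ^ 2 * q ^ i

lemma sq_sub_mul_sub_le {c : ℝ} (hc₀ : 0 ≤ c) (hc₁ : c ≤ 1) (x y : ℝ) :
    (x - c * (x - y)) ^ 2 ≤ (1 - c) * x ^ 2 + c * y ^ 2 := by
  nlinarith [mul_nonneg (mul_nonneg hc₀ (sub_nonneg.mpr hc₁)) (sq_nonneg (x - y))]

lemma sum_range_succ_shift_mul_pow_le {q : ℝ} (n : ℕ) (f : ℤ → ℝ)
    (hf : f (-1) ≤ q ^ (n + 1) * f n) :
    ∑ i ∈ range (n + 1), f (i - 1) * q ^ i ≤ q * ∑ i ∈ range (n + 1), f i * q ^ i := by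
  have hshift : ∑ i ∈ range (n + 1), f (i - 1) * q ^ i
      = q * ∑ i ∈ range n, f i * q ^ i + f (-1) := by
    rw [sum_range_succ', mul_sum]
    congr 1
    · refine sum_congr rfl fun i _ => ?_
      rw [Nat.cast_succ, add_sub_cancel_right, pow_succ]
      ring
    · simp
  have hlast : q * (f n * q ^ n) = q ^ (n + 1) * f n := by ring
  rw [hshift, sum_range_succ, mul_add, hlast]
  linarith

lemma weightedEnergy_upwind_le {q c : ℝ} (hq : 0 ≤ q) (hc₀ : 0 ≤ c) (hc₁ : c ≤ 1)
    (n : ℕ) {u v : ℤ → ℝ} (hv : ∀ i : ℤ, 0 ≤ i → i ≤ n → v i = u i - c * (u i - u (i - 1)))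
    (hbc : u (-1) ^ 2 ≤ q ^ (n + 1) * u n ^ 2) :
    weightedEnergy q n v ≤ (1 - c * (1 - q)) * weightedEnergy q n u := by
  have hconvex : ∀ i ∈ range (n + 1),
      v i ^ 2 * q ^ i ≤ (1 - c) * (u i ^ 2 * q ^ i) + c * (u (i - 1) ^ 2 * q ^ i) := by
    intro i hi
    have hin : (i : ℤ) ≤ n := by have := mem_range.mp hi; omega
    rw [hv i (Int.natCast_nonneg i) hin]
    nlinarith [mul_le_mul_of_nonneg_right (sq_sub_mul_sub_le hc₀ hc₁ (u i) (u (i - 1)))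
      (pow_nonneg hq i)]
  have hshift := sum_range_succ_shift_mul_pow_le n (fun i => u i ^ 2) hbc
  calc weightedEnergy q n v
      ≤ (1 - c) * weightedEnergy q n u + c * ∑ i ∈ range (n + 1), u (i - 1) ^ 2 * q ^ i := by
        unfold weightedEnergy
        rw [mul_sum, mul_sum, ← sum_add_distrib]
        exact sum_le_sum hconvex
    _ ≤ (1 - c) * weightedEnergy q n u + c * (q * weightedEnergy q n u) := by
        gcongr
        exact hshift
    _ = (1 - c * (1 - q)) * weightedEnergy q n u := by ring

lemma mul_exp_neg_le_one_sub_exp_neg (a : ℝ) : a * exp (-a) ≤ 1 - exp (-a) := by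
  have h := mul_le_mul_of_nonneg_left (add_one_le_exp a) (exp_pos (-a)).le
  rw [← exp_add, neg_add_cancel, exp_zero] at h
  linarith

lemma sq_le_exp_neg_of_le_log_inv {κ μ : ℝ} (hκ : κ ∈ Set.Ioo (0 : ℝ) 1)
    (hμ : μ ≤ log (1 / κ)) : κ ^ 2 ≤ exp (-μ) := by
  obtain ⟨hκ₀, hκ₁⟩ := hκ
  have hκμ : κ ≤ exp (-μ) := by
    rw [← exp_log hκ₀, exp_le_exp, ← neg_le_neg_iff, neg_neg, ← log_inv, ← one_div]
    exact hμ
  nlinarith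

lemma one_sub_upwind_mul_le_exp {lam μ Δt Δx ν : ℝ} (hlam : 0 < lam) (hΔt : 0 < Δt)
    (hΔx : 0 < Δx) (hμ : 0 ≤ μ) (hν : ν ≤ lam * μ * exp (-μ * Δx) / 2) :
    1 - lam * Δt / Δx * (1 - exp (-μ * Δx)) ≤ exp (-ν * Δt) := by
  have hdecay : μ * Δx * exp (-μ * Δx) ≤ 1 - exp (-μ * Δx) := by
    simpa only [neg_mul] using mul_exp_neg_le_one_sub_exp_neg (μ * Δx)
  have hc : 0 ≤ lam * Δt / Δx := by positivity
  have hgain : lam * Δt * μ * exp (-μ * Δx) ≤ lam * Δt / Δx * (1 - exp (-μ * Δx)) := by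
    calc lam * Δt * μ * exp (-μ * Δx) = lam * Δt / Δx * (μ * Δx * exp (-μ * Δx)) := by
          field_simp
      _ ≤ _ := mul_le_mul_of_nonneg_left hdecay hc
  have hpos : 0 ≤ lam * Δt * μ * exp (-μ * Δx) := by positivity
  nlinarith [add_one_le_exp (-ν * Δt), mul_le_mul_of_nonneg_right hν hΔt.le]

/-- Exponential decay of the discrete exponentially weighted Lyapunov
function for the upwind discretization of the linear diagonal hyperbolic system
`∂_t u_j + λ_j ∂_x u_j = 0` on `[0,1]` with boundary feedback `u_j(t,0) = κ_j u_j(t,1)`.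
The number of components is `d + 1 ≥ 1`; cells are `i = 0,…,N` of size `Δx = 1/(N+1)`,
with ghost cell `i = −1` implementing the feedback. -/
theorem discrete_lyapunov_exponential_decay
    (d N : ℕ) (Δt : ℝ) (hΔt : 0 < Δt)
    (lam kap mu : Fin (d + 1) → ℝ)
    (hlam : ∀ j, 0 < lam j)
    (Δx : ℝ) (hΔx : Δx = 1 / (N + 1))
    (hCFL : ∀ j, lam j * Δt / Δx ≤ 1)
    (hkap : ∀ j, kap j ∈ Set.Ioo (0 : ℝ) 1)
    (hmu : ∀ j, 0 < mu j ∧ mu j ≤ Real.log (1 / kap j))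
    (U : Fin (d + 1) → ℤ → ℕ → ℝ)
    (hscheme : ∀ j, ∀ i : ℤ, 0 ≤ i → i ≤ (N : ℤ) → ∀ m : ℕ,
      U j i (m + 1) = U j i m - (lam j * Δt / Δx) * (U j i m - U j (i - 1) m))
    (hbc : ∀ j, ∀ m : ℕ, U j (-1) m = kap j * U j (N : ℤ) m)
    (L : ℕ → ℝ)
    (hL : ∀ m : ℕ, L m = Δx * ∑ i ∈ Finset.range (N + 1), ∑ j,
      (U j (i : ℤ) m) ^ 2 * Real.exp (-(mu j) * ((i : ℝ) * Δx)))
    (ν : ℝ)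
    (hν : ν = Finset.univ.inf' Finset.univ_nonempty
      (fun j => lam j * mu j * Real.exp (-(mu j) * Δx) / 2)) :
    ∀ m : ℕ, L m ≤ Real.exp (-ν * ((m : ℝ) * Δt)) * L 0 := by
  have hΔx₀ : 0 < Δx := by rw [hΔx]; positivity
  set q : Fin (d + 1) → ℝ := fun j => exp (-mu j * Δx)
  have hweight : ∀ j (i : ℕ), exp (-mu j * (i * Δx)) = q j ^ i := fun j i => by
    rw [← exp_nat_mul]; ring_nf
  have hLE : ∀ m, L m = Δx * ∑ j, weightedEnergy (q j) N (fun i => U j i m) := fun m => by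
    simp only [hL, weightedEnergy, sum_comm (γ := Fin (d + 1)), hweight]
  have hghost : ∀ j m, U j (-1) m ^ 2 ≤ q j ^ (N + 1) * U j N m ^ 2 := fun j m => by
    have hq : q j ^ (N + 1) = exp (-mu j) := by
      rw [← hweight, hΔx]; push_cast; field_simp
    rw [hbc, hq, mul_pow]
    exact mul_le_mul_of_nonneg_right (sq_le_exp_neg_of_le_log_inv (hkap j) (hmu j).2)
      (sq_nonneg _)
  have hstep : ∀ m, L (m + 1) ≤ exp (-ν * Δt) * L m := fun m => by
    rw [hLE, hLE, mul_left_comm]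
    gcongr Δx * ?_
    rw [mul_sum]
    gcongr with j
    refine (weightedEnergy_upwind_le (exp_pos _).le (by positivity [hlam j]) (hCFL j) N
      (fun i hi₀ hiN => hscheme j i hi₀ hiN m) (hghost j m)).trans ?_
    gcongr
    · exact sum_nonneg fun i _ => mul_nonneg (sq_nonneg _) (pow_nonneg (exp_pos _).le _)
    · exact one_sub_upwind_mul_le_exp (hlam j) hΔt hΔx₀ (hmu j).1.le
        (hν ▸ inf'_le _ (mem_univ j))
  intro m
  rw [mul_comm (m : ℝ), ← mul_assoc, mul_comm _ (m : ℝ), exp_nat_mul]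
  exact le_geom (exp_pos _).le m fun k _ => hstep k
end
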